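/- With G the PAC precoding matrix (upper-triangular Toeplitz, g₀ = 1) and P_n the polar transform over 𝔽₂, for every nonzero v ∈ 𝔽₂^N with least nonzero index i, the PAC codeword v·G·P_n has Hamming weight at least 2^{w(i)}. Consequently the minimum distance of the PAC code with information set 𝒜 is at least min_{i∈𝒜} 2^{w(i)}. -/

import Mathlib

/-!
Write `P_{n+1} = P ⊗ P_n` and split `u` into the halves `u₀, u₁` selected by the top bit of
the index. Then `u P_{n+1} = (x + y | y)` with `x = u₀ P_n`, `y = u₁ P_n` (Plotkin's
construction), and `wt (x + y) + wt y ≥ wt x`. If the leading index `i` of `u` lies in the lower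
half, it is the leading index of `u₀` and induction bounds `wt x`; otherwise `u₀ = 0`, the codeword
is `(y | y)`, and the weight doubles exactly as `2 ^ w(i)` does when the top bit is set. The
precoder `G` is upper triangular with unit diagonal, so `v G` has the same leading index as `v`.
-/

open Matrix

/-- The 2×2 polar kernel `P = [[1,0],[1,1]]` over GF(2). -/
def Pmat : Matrix (Fin 2) (Fin 2) (ZMod 2) := !![1, 0; 1, 1]

/-- The polar transform `P_n = P^{⊗n}`, the n-fold Kronecker power of `Pmat`. -/
def polarP : (n : ℕ) → Matrix (Fin (2 ^ n)) (Fin (2 ^ n)) (ZMod 2)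
  | 0 => 1
  | n + 1 =>
    Matrix.reindex (finProdFinEquiv.trans (finCongr (by ring)))
      (finProdFinEquiv.trans (finCongr (by ring)))
      (Matrix.kroneckerMap (· * ·) Pmat (polarP n))

/-- The N×N upper-triangular Toeplitz convolutional precoding matrix:
`G i j = g (j - i)` when `0 ≤ j - i ≤ m`, else `0`. -/
def toeplitzG (N m : ℕ) (g : ℕ → ZMod 2) : Matrix (Fin N) (Fin N) (ZMod 2) :=
  Matrix.of fun i j => if i.val ≤ j.val ∧ j.val - i.val ≤ m then g (j.val - i.val) else 0

theorem Nat.digits_sum_add_two_pow {n b : ℕ} (hb : b < 2 ^ n) :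
    (Nat.digits 2 (b + 2 ^ n)).sum = (Nat.digits 2 b).sum + 1 := by
  have hlen : (Nat.digits 2 b).length ≤ n := (Nat.digits_length_le_iff one_lt_two b).mpr hb
  have h := Nat.digits_append_zeroes_append_digits (n := b) (m := 1)
    (k := n - (Nat.digits 2 b).length) one_lt_two one_pos
  rw [Nat.add_sub_cancel' hlen, mul_one] at h
  rw [← h]
  simp

section Hamming

variable {ι : Type*} [Fintype ι]

theorem hammingNorm_le_hammingNorm_add_add {β : ι → Type*} [∀ i, AddGroup (β i)]
    [∀ i, DecidableEq (β i)] [DecidableEq ι] (x y : ∀ i, β i) :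
    hammingNorm x ≤ hammingNorm (x + y) + hammingNorm y := by
  refine (Finset.card_le_card fun i hi => ?_).trans (Finset.card_union_le _ _)
  simp only [Finset.mem_filter, Finset.mem_univ, true_and, Finset.mem_union, Pi.add_apply]
    at hi ⊢
  by_contra! h
  exact hi (by simpa [h.2] using h.1)

theorem hammingNorm_eq_sum_comp_equiv {α β M : Type*} [Fintype α] [Fintype β] [Zero M]
    [DecidableEq M] (e : α × β ≃ ι) (f : ι → M) :
    hammingNorm f = ∑ a, hammingNorm fun b => f (e (a, b)) := by
  simp only [hammingNorm, Finset.card_filter]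
  rw [← e.sum_comp, Fintype.sum_prod_type]

end Hamming

theorem vecMul_reindex_kronecker_apply {R α α' β β' γ γ' : Type*} [CommSemiring R]
    [Fintype α] [Fintype β] [Fintype γ] (A : Matrix α α' R) (B : Matrix β β' R)
    (e : α × β ≃ γ) (f : α' × β' ≃ γ') (u : γ → R) (c : α') (d : β') :
    (u ᵥ* reindex e f (kroneckerMap (· * ·) A B)) (f (c, d)) =
      ∑ a, A a c * ((fun b => u (e (a, b))) ᵥ* B) d := by
  simp only [vecMul, dotProduct, reindex_apply, submatrix_apply, Equiv.symm_apply_apply,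
    kroneckerMap_apply, ← e.sum_comp, Fintype.sum_prod_type, Finset.mul_sum]
  refine Finset.sum_congr rfl fun a _ => Finset.sum_congr rfl fun b _ => ?_
  ring

section Polar

variable {n : ℕ}

def polarEquiv (n : ℕ) : Fin 2 × Fin (2 ^ n) ≃ Fin (2 ^ (n + 1)) :=
  finProdFinEquiv.trans (finCongr (by ring))

theorem polarEquiv_val (c : Fin 2) (d : Fin (2 ^ n)) :
    (polarEquiv n (c, d) : ℕ) = d + 2 ^ n * c :=
  rfl

theorem polarP_succ (n : ℕ) :
    polarP (n + 1) =
      reindex (polarEquiv n) (polarEquiv n) (kroneckerMap (· * ·) Pmat (polarP n)) :=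
  rfl

/-- The half of `u` on the indices whose top bit is `c`. -/
def polarHalf {α : Type*} (u : Fin (2 ^ (n + 1)) → α) (c : Fin 2) (d : Fin (2 ^ n)) : α :=
  u (polarEquiv n (c, d))

theorem vecMul_polarP_succ_apply (u : Fin (2 ^ (n + 1)) → ZMod 2) (c : Fin 2)
    (d : Fin (2 ^ n)) :
    (u ᵥ* polarP (n + 1)) (polarEquiv n (c, d)) =
      ∑ a, Pmat a c * (polarHalf u a ᵥ* polarP n) d :=
  vecMul_reindex_kronecker_apply _ _ _ _ u c d

theorem polarHalf_vecMul_polarP_succ (u : Fin (2 ^ (n + 1)) → ZMod 2) :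
    polarHalf (u ᵥ* polarP (n + 1)) 0 = polarHalf u 0 ᵥ* polarP n + polarHalf u 1 ᵥ* polarP n ∧
      polarHalf (u ᵥ* polarP (n + 1)) 1 = polarHalf u 1 ᵥ* polarP n := by
  constructor <;> ext d <;> simp [polarHalf, vecMul_polarP_succ_apply, Pmat]

theorem hammingNorm_vecMul_polarP_succ (u : Fin (2 ^ (n + 1)) → ZMod 2) :
    hammingNorm (u ᵥ* polarP (n + 1)) =
      hammingNorm (polarHalf u 0 ᵥ* polarP n + polarHalf u 1 ᵥ* polarP n) +
        hammingNorm (polarHalf u 1 ᵥ* polarP n) := by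
  obtain ⟨h₀, h₁⟩ := polarHalf_vecMul_polarP_succ u
  rw [hammingNorm_eq_sum_comp_equiv (polarEquiv n), Fin.sum_univ_two]
  exact congrArg₂ (· + ·) (congrArg hammingNorm h₀) (congrArg hammingNorm h₁)

theorem polarEquiv_lt_polarEquiv_iff {c c' : Fin 2} {d d' : Fin (2 ^ n)} :
    polarEquiv n (c, d) < polarEquiv n (c', d') ↔ c < c' ∨ c = c' ∧ d < d' := by
  have := d.isLt
  have := d'.isLt
  rw [Fin.lt_def, polarEquiv_val, polarEquiv_val]
  fin_cases c <;> fin_cases c' <;> simp <;> omega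

theorem two_pow_digits_sum_le_hammingNorm_vecMul_polarP (u : Fin (2 ^ n) → ZMod 2)
    (i : Fin (2 ^ n)) (hi : u i ≠ 0) (hu : ∀ j < i, u j = 0) :
    2 ^ (Nat.digits 2 i).sum ≤ hammingNorm (u ᵥ* polarP n) := by
  induction n with
  | zero =>
    obtain rfl : i = 0 := Fin.ext (Nat.lt_one_iff.mp i.isLt)
    simpa [polarP, Nat.one_le_iff_ne_zero] using ne_of_apply_ne (· 0) hi
  | succ n ih =>
    obtain ⟨⟨c, d⟩, rfl⟩ := (polarEquiv n).surjective i
    have ih_half :=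
      ih (polarHalf u c) d hi fun j hj => hu _ (polarEquiv_lt_polarEquiv_iff.2 (.inr ⟨rfl, hj⟩))
    rw [hammingNorm_vecMul_polarP_succ, polarEquiv_val]
    fin_cases c
    · simpa using ih_half.trans (hammingNorm_le_hammingNorm_add_add _ _)
    · have hlow : polarHalf u 0 = 0 :=
        funext fun j => hu _ (polarEquiv_lt_polarEquiv_iff.2 (.inl zero_lt_one))
      simp only [Fin.mk_one, hlow, zero_vecMul, zero_add, mul_one,
        Nat.digits_sum_add_two_pow d.isLt] at ih_half ⊢
      omega

end Polar

section Triangular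

variable {ι R : Type*} [Fintype ι] [LinearOrder ι] [Semiring R] {M : Matrix ι ι R}
  {v : ι → R} {i : ι}

theorem vecMul_apply_eq_zero_of_blockTriangular (hM : M.BlockTriangular id)
    (hv : ∀ j < i, v j = 0) {j : ι} (hj : j < i) : (v ᵥ* M) j = 0 := by
  refine Finset.sum_eq_zero fun k _ => ?_
  rcases lt_or_ge k i with hk | hk
  · exact mul_eq_zero_of_left (hv k hk) _
  · exact mul_eq_zero_of_right _ (hM (hj.trans_le hk))

theorem vecMul_apply_of_blockTriangular (hM : M.BlockTriangular id) (hv : ∀ j < i, v j = 0) :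
    (v ᵥ* M) i = v i * M i i := by
  refine Finset.sum_eq_single i (fun k _ hk => ?_) (by simp)
  rcases hk.lt_or_gt with hk | hk
  · exact mul_eq_zero_of_left (hv k hk) _
  · exact mul_eq_zero_of_right _ (hM hk)

end Triangular

theorem toeplitzG_blockTriangular (N m : ℕ) (g : ℕ → ZMod 2) :
    (toeplitzG N m g).BlockTriangular id := fun _ _ hij =>
  if_neg fun h => hij.not_ge h.1

theorem toeplitzG_apply_self (N m : ℕ) (g : ℕ → ZMod 2) (i : Fin N) :
    toeplitzG N m g i i = g 0 := by
  simp [toeplitzG]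

/-- Every nonzero PAC codeword `v·G·P_n` with least nonzero index `i` of `v` has
weight at least `2^{w(i)}`; consequently the minimum distance of the PAC code
with information set `𝒜` is at least `min_{i∈𝒜} 2^{w(i)}`. -/
theorem pac_weight_lower_bound (n m : ℕ) (g : ℕ → ZMod 2) (hg : g 0 = 1)
    (A : Finset (Fin (2 ^ n))) (hA : A.Nonempty) :
    (∀ (v : Fin (2 ^ n) → ZMod 2) (i : Fin (2 ^ n)), v ≠ 0 → v i ≠ 0 →
      (∀ j : Fin (2 ^ n), j < i → v j = 0) →
      2 ^ ((Nat.digits 2 i.val).sum) ≤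
        hammingNorm ((v ᵥ* toeplitzG (2 ^ n) m g) ᵥ* polarP n)) ∧
    (∀ v : Fin (2 ^ n) → ZMod 2, v ≠ 0 → (∀ i : Fin (2 ^ n), v i ≠ 0 → i ∈ A) →
      (A.image fun i => 2 ^ ((Nat.digits 2 i.val).sum)).min' (hA.image _) ≤
        hammingNorm ((v ᵥ* toeplitzG (2 ^ n) m g) ᵥ* polarP n)) := by
  have hG := toeplitzG_blockTriangular (2 ^ n) m g
  have leading (v : Fin (2 ^ n) → ZMod 2) (i : Fin (2 ^ n)) (hi : v i ≠ 0)
      (hv : ∀ j < i, v j = 0) :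
      2 ^ (Nat.digits 2 i).sum ≤ hammingNorm ((v ᵥ* toeplitzG (2 ^ n) m g) ᵥ* polarP n) := by
    refine two_pow_digits_sum_le_hammingNorm_vecMul_polarP _ i ?_ fun j hj =>
      vecMul_apply_eq_zero_of_blockTriangular hG hv hj
    rwa [vecMul_apply_of_blockTriangular hG hv, toeplitzG_apply_self, hg, mul_one]
  refine ⟨fun v i _ => leading v i, fun v hv hA_supp => ?_⟩
  obtain ⟨i, hi, hmin⟩ := wellFounded_lt.has_min {j | v j ≠ 0} (Function.ne_iff.mp hv)
  have hv_lt (j : Fin (2 ^ n)) (hj : j < i) : v j = 0 := not_not.mp fun h => hmin j h hj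
  exact (Finset.min'_le _ _ (Finset.mem_image_of_mem _ (hA_supp i hi))).trans
    (leading v i hi hv_lt)
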